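/- A solution φ with all agents investing positively implements the efficient profile x* (i.e., the first-order conditions ∂C_i(x*)/∂x_i = 0 hold for all i, matching the efficiency first-order conditions ∂ℂ(x*)/∂x_i = 0) if and only if for each agent i the direct liability is φ(i,i) = ℓ_i + ∑_{k > i} (∏_{i < j ≤ k} p_j(x*_j))·ℓ_k. -/

import Mathlib

/-!
Only agent `i`'s own term of its cost depends on `xᵢ`, so `∂Cᵢ/∂xᵢ = 1 - Pᵢ pᵢ'(xᵢ) φ(i,i)`
with `Pᵢ = ∏_{h<i} p_h(x_h)`. Splitting each product `∏_{j≤k}` at `i`, the efficiency condition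
at `x*` reads `pᵢ'(x*ᵢ) Pᵢ Tᵢ = 1`, where `Tᵢ = ℓᵢ + ∑_{k>i} (∏_{i<j≤k} p_j(x*_j)) ℓ_k`. Hence
`Pᵢ pᵢ'(x*ᵢ)` is invertible with inverse `Tᵢ`, and agent `i`'s first-order condition holds exactly
when `φ(i,i) = Tᵢ`.
-/

open Finset

/-- Agent i's expected cost at profile x under solution φ. -/
noncomputable def expCost (n : ℕ) (p : Fin n → ℝ → ℝ) (φ : Fin n → Fin n → ℝ)
    (i : Fin n) (x : Fin n → ℝ) : ℝ :=
  (∑ j ∈ univ.filter (fun j => j < i),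
    (∏ h ∈ univ.filter (fun h => h < j), p h (x h)) * (1 - p j (x j)) * φ j i)
  + (∏ h ∈ univ.filter (fun h => h < i), p h (x h)) * (1 - p i (x i)) * φ i i
  + x i

section FiniteLinearOrder

variable {ι M R : Type*} [Fintype ι] [LinearOrder ι]

theorem prod_filter_le_eq_prod_filter_le_mul_prod_filter_Ioc [CommMonoid M] (f : ι → M)
    {i k : ι} (hik : i ≤ k) :
    ∏ j ∈ univ.filter (· ≤ k), f j =
      (∏ j ∈ univ.filter (· ≤ i), f j) * ∏ j ∈ univ.filter (fun j => i < j ∧ j ≤ k), f j := by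
  rw [← prod_filter_mul_prod_filter_not (univ.filter (· ≤ k)) (· ≤ i), filter_filter,
    filter_filter]
  congr 2 <;> ext j <;> simp only [mem_filter, mem_univ, true_and, not_le]
  · exact ⟨And.right, fun hji => ⟨hji.trans hik, hji⟩⟩
  · exact And.comm

theorem prod_filter_le_eq_prod_filter_lt_mul [CommMonoid M] (f : ι → M) (i : ι) :
    ∏ j ∈ univ.filter (· ≤ i), f j = (∏ j ∈ univ.filter (· < i), f j) * f i := by
  rw [← prod_filter_mul_prod_filter_not (univ.filter (· ≤ i)) (· < i), filter_filter,
    filter_filter]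
  congr 2
  · ext j
    simp only [mem_filter, mem_univ, true_and]
    exact ⟨And.right, fun h => ⟨h.le, h⟩⟩
  · convert prod_singleton f i
    ext j
    simp only [mem_filter, mem_univ, true_and, not_lt, mem_singleton]
    exact ⟨fun h => le_antisymm h.1 h.2, fun h => ⟨h.le, h.ge⟩⟩

theorem sum_filter_ge_eq_add_sum_filter_gt [AddCommMonoid M] (g : ι → M) (i : ι) :
    ∑ k ∈ univ.filter (i ≤ ·), g k = g i + ∑ k ∈ univ.filter (i < ·), g k := by
  rw [← sum_filter_add_sum_filter_not (univ.filter (i ≤ ·)) (i < ·), filter_filter,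
    filter_filter, add_comm]
  congr 2
  · convert sum_singleton g i
    ext j
    simp only [mem_filter, mem_univ, true_and, not_lt, mem_singleton]
    exact ⟨fun h => le_antisymm h.2 h.1, fun h => ⟨h.ge, h.le⟩⟩
  · ext j
    simp only [mem_filter, mem_univ, true_and]
    exact ⟨And.right, fun h => ⟨h.le, h⟩⟩

theorem sum_filter_ge_prod_filter_le_mul [CommSemiring R] (f ℓ : ι → R) (i : ι) :
    ∑ k ∈ univ.filter (i ≤ ·), (∏ j ∈ univ.filter (· ≤ k), f j) * ℓ k =
      (∏ j ∈ univ.filter (· < i), f j) * f i *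
        (ℓ i + ∑ k ∈ univ.filter (i < ·),
          (∏ j ∈ univ.filter (fun j => i < j ∧ j ≤ k), f j) * ℓ k) := by
  rw [sum_filter_ge_eq_add_sum_filter_gt, mul_add, mul_sum,
    ← prod_filter_le_eq_prod_filter_lt_mul]
  congr 1
  refine sum_congr rfl fun k hk => ?_
  rw [prod_filter_le_eq_prod_filter_le_mul_prod_filter_Ioc f (mem_filter.1 hk).2.le, mul_assoc]

end FiniteLinearOrder

section ExpCost

variable {n : ℕ} {p : Fin n → ℝ → ℝ} {φ : Fin n → Fin n → ℝ} {i : Fin n} {x : Fin n → ℝ}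

theorem expCost_update_self (t : ℝ) :
    expCost n p φ i (Function.update x i t) =
      (∑ j ∈ univ.filter (· < i),
        (∏ h ∈ univ.filter (· < j), p h (x h)) * (1 - p j (x j)) * φ j i)
      + (∏ h ∈ univ.filter (· < i), p h (x h)) * (1 - p i t) * φ i i + t := by
  have hprod : ∀ j ≤ i, ∏ h ∈ univ.filter (· < j), p h (Function.update x i t h) =
      ∏ h ∈ univ.filter (· < j), p h (x h) := fun j hj =>
    prod_congr rfl fun h hh => by
      rw [Function.update_of_ne ((mem_filter.1 hh).2.trans_le hj).ne]
  unfold expCost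
  rw [Function.update_self, hprod i le_rfl]
  congr 2
  refine sum_congr rfl fun j hj => ?_
  have hji : j < i := (mem_filter.1 hj).2
  rw [hprod j hji.le, Function.update_of_ne hji.ne]

theorem hasDerivAt_expCost_update_self {D : ℝ} (hD : HasDerivAt (p i) D (x i)) :
    HasDerivAt (fun t => expCost n p φ i (Function.update x i t))
      (1 - (∏ h ∈ univ.filter (· < i), p h (x h)) * D * φ i i) (x i) := by
  simp_rw [expCost_update_self]
  refine (((((hD.const_sub 1).const_mul (∏ h ∈ univ.filter (· < i), p h (x h))).mul_const
    (φ i i)).const_add (∑ j ∈ univ.filter (· < i),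
      (∏ h ∈ univ.filter (· < j), p h (x h)) * (1 - p j (x j)) * φ j i)).add
    (hasDerivAt_id' (x i))).congr_deriv ?_
  ring

end ExpCost

theorem deriv_expCost_update_self_eq_zero_iff {n : ℕ} (ℓ : Fin n → ℝ) (p : Fin n → ℝ → ℝ)
    (φ : Fin n → Fin n → ℝ) (xstar : Fin n → ℝ) (i : Fin n)
    (hFOC : (deriv (p i) (xstar i) / p i (xstar i)) *
        ∑ k ∈ univ.filter (fun k => i ≤ k),
          (∏ j ∈ univ.filter (fun j => j ≤ k), p j (xstar j)) * ℓ k = 1) :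
    deriv (fun t => expCost n p φ i (Function.update xstar i t)) (xstar i) = 0 ↔
      φ i i = ℓ i + ∑ k ∈ univ.filter (fun k => i < k),
        (∏ j ∈ univ.filter (fun j => i < j ∧ j ≤ k), p j (xstar j)) * ℓ k := by
  rw [sum_filter_ge_prod_filter_le_mul] at hFOC
  set P := ∏ h ∈ univ.filter (· < i), p h (xstar h)
  set D := deriv (p i) (xstar i)
  set T := ℓ i + ∑ k ∈ univ.filter (fun k => i < k),
    (∏ j ∈ univ.filter (fun j => i < j ∧ j ≤ k), p j (xstar j)) * ℓ k
  have hPDT : P * D * T = 1 := by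
    have hpi : p i (xstar i) ≠ 0 := fun h => by simp [h] at hFOC
    rw [← hFOC]
    field_simp
  have hPD : P * D ≠ 0 := left_ne_zero_of_mul_eq_one hPDT
  -- `D ≠ 0` makes `p i` differentiable at `xstar i`, as `deriv` is `0` otherwise.
  have hD : HasDerivAt (p i) D (xstar i) :=
    (differentiableAt_of_deriv_ne_zero (right_ne_zero_of_mul hPD)).hasDerivAt
  rw [(hasDerivAt_expCost_update_self hD).deriv, sub_eq_zero, eq_comm, mul_comm,
    mul_eq_one_iff_eq_inv₀ hPD, ← eq_inv_of_mul_eq_one_right hPDT]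

theorem stmt_10_general (n : ℕ) (ℓ : Fin n → ℝ) (p : Fin n → ℝ → ℝ) (φ : Fin n → Fin n → ℝ)
    (xstar : Fin n → ℝ)
    (hFOC : ∀ i : Fin n,
      (deriv (p i) (xstar i) / p i (xstar i)) *
        ∑ k ∈ univ.filter (fun k => i ≤ k),
          (∏ j ∈ univ.filter (fun j => j ≤ k), p j (xstar j)) * ℓ k = 1) :
    (∀ i : Fin n,
      deriv (fun t => expCost n p φ i (Function.update xstar i t)) (xstar i) = 0) ↔
    (∀ i : Fin n, φ i i = ℓ i +
      ∑ k ∈ univ.filter (fun k => i < k),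
        (∏ j ∈ univ.filter (fun j => i < j ∧ j ≤ k), p j (xstar j)) * ℓ k) :=
  forall_congr' fun i => deriv_expCost_update_self_eq_zero_iff ℓ p φ xstar i (hFOC i)

/-- Theorem 1: A solution φ implements the efficient profile x*
(all agents' first-order conditions hold at x*) if and only if
φ(i,i) = ℓ_i + ∑_{k>i} (∏_{i<j≤k} p_j(x*_j))·ℓ_k for each agent i. -/
theorem stmt_10 (n : ℕ) (ℓ : Fin n → ℝ) (p : Fin n → ℝ → ℝ) (φ : Fin n → Fin n → ℝ)
    (hℓ : ∀ j, 0 < ℓ j)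
    (hp_mono : ∀ i, StrictMonoOn (p i) (Set.Ici 0))
    (hp_concave : ∀ i, StrictConcaveOn ℝ (Set.Ici 0) (p i))
    (hp_diff : ∀ i, Differentiable ℝ (p i))
    (hp_pos : ∀ i x, 0 < x → 0 < p i x)
    (xstar : Fin n → ℝ) (hx_pos : ∀ i, 0 < xstar i)
    (hFOC : ∀ i : Fin n,
      (deriv (p i) (xstar i) / p i (xstar i)) *
        ∑ k ∈ univ.filter (fun k => i ≤ k),
          (∏ j ∈ univ.filter (fun j => j ≤ k), p j (xstar j)) * ℓ k = 1) :
    (∀ i : Fin n,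
      deriv (fun t => expCost n p φ i (Function.update xstar i t)) (xstar i) = 0) ↔
    (∀ i : Fin n, φ i i = ℓ i +
      ∑ k ∈ univ.filter (fun k => i < k),
        (∏ j ∈ univ.filter (fun j => i < j ∧ j ≤ k), p j (xstar j)) * ℓ k) :=
  stmt_10_general n ℓ p φ xstar hFOC
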